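/- arXiv:1302.3024 — 2 statements merged into one kernel-verified Lean document; each statement's English description precedes it below -/
import Mathlib

section
/- Let f : Θ × X → Θ × X be a homeomorphism of skew product form f(θ,x) = (α(θ), f_θ(x)), where α is a minimal homeomorphism of a compact metric space Θ and X is a compact metric space, and let M ⊆ Θ × X be a nonempty compact f-invariant set with π₁(M) = Θ. If M_{θ₀} = {x : (θ₀,x) ∈ M} is a singleton for some θ₀ ∈ Θ (i.e. M is pinched), then the set {θ ∈ Θ : M_θ is a singleton} is dense in Θ; consequently the projection π₁|_M is an almost 1-1 factor map from (M, f|_M) onto (Θ, α), and if moreover α is almost periodic and M is minimal, then M is an almost automorphic minimal set. -/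
open Set Function MeasureTheory

noncomputable section

/-- The circle `T¹ = ℝ/ℤ`. -/
abbrev T1 := AddCircle (1 : ℝ)

/-- The `n`-th iterate (`n ∈ ℤ`) of a bijection. -/
def zIter {X : Type*} (g : Equiv.Perm X) (n : ℤ) : X → X := fun x => (g ^ n) x

/-- A set of integers is syndetic if it has bounded gaps. -/
def ZSyndetic (S : Set ℤ) : Prop := ∃ N : ℕ, ∀ n : ℤ, ∃ k ∈ S, |k - n| ≤ (N : ℤ)

/-- A homeomorphism `α` of a metric space is almost periodic if for every `ε > 0` the set
`{n ∈ ℤ | dist(αⁿ, Id) < ε}` is syndetic. -/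
def AlmostPeriodicHomeo {Θ : Type*} [MetricSpace Θ] (α : Θ ≃ₜ Θ) : Prop :=
  ∀ ε > (0 : ℝ), ZSyndetic {n : ℤ | ∀ θ : Θ, dist (zIter α.toEquiv n θ) θ < ε}

/-- A homeomorphism is minimal if every (two-sided) orbit is dense. -/
def MinimalHomeo {Θ : Type*} [TopologicalSpace Θ] (α : Θ ≃ₜ Θ) : Prop :=
  ∀ θ : Θ, Dense (range fun n : ℤ => zIter α.toEquiv n θ)

/-- A self-map `g` of a metric space is almost periodic if its family of iterates
is (uniformly) equicontinuous. -/
def AlmostPeriodicMap {Y : Type*} [MetricSpace Y] (g : Y → Y) : Prop :=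
  ∀ ε > (0 : ℝ), ∃ δ > (0 : ℝ), ∀ y y' : Y, dist y y' < δ → ∀ n : ℕ, dist (g^[n] y) (g^[n] y') < ε

/-- `h` is a factor map (semiconjugacy) from `(X, f)` onto `(Y, g)`:
a continuous surjection with `h ∘ f = g ∘ h`.  Then `(X, f)` is a topological
extension of `(Y, g)`. -/
def IsFactorMap {X Y : Type*} [TopologicalSpace X] [TopologicalSpace Y]
    (f : X → X) (g : Y → Y) (h : X → Y) : Prop :=
  Continuous h ∧ Surjective h ∧ h ∘ f = g ∘ h

/-- A map `h` is almost 1-1 if the set of points of the target having exactly one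
preimage is dense. -/
def AlmostOneOne {X Y : Type*} [TopologicalSpace Y] (h : X → Y) : Prop :=
  Dense {y : Y | ∃! x, h x = y}

/-- A witness that the system `(X, f)` is almost automorphic: an almost periodic
homeomorphism of a compact metric space which is an almost 1-1 factor of `(X, f)`. -/
structure AAWitness {X : Type*} [TopologicalSpace X] (f : X → X) where
  (Y : Type)
  [mY : MetricSpace Y]
  [cY : CompactSpace Y]
  (g : Y ≃ₜ Y)
  (hmap : X → Y)
  (factor : IsFactorMap f (⇑g) hmap)
  (a11 : AlmostOneOne hmap)
  (ap : ∀ ε > (0 : ℝ), ∃ δ > (0 : ℝ), ∀ y y' : Y, dist y y' < δ →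
        ∀ n : ℤ, dist (zIter g.toEquiv n y) (zIter g.toEquiv n y') < ε)

/-- `M` is a minimal set of `f`: nonempty, closed, invariant, and without proper
nonempty closed invariant subsets. -/
def IsMinimalSet {X : Type*} [TopologicalSpace X] (f : X → X) (M : Set X) : Prop :=
  M.Nonempty ∧ IsClosed M ∧ f '' M = M ∧
    ∀ M' ⊆ M, M'.Nonempty → IsClosed M' → f '' M' ⊆ M' → M' = M

/-- The restriction of `f` to an invariant set. -/
def restrictMap {X : Type*} {f : X → X} {M : Set X} (hM : Set.MapsTo f M M) : ↥M → ↥M :=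
  Set.MapsTo.restrict f M M hM

/-- `M` is an almost automorphic minimal set of `f`: `f` restricted to `M` admits an
almost periodic almost 1-1 factor. -/
def IsAAMinimal {X : Type*} [MetricSpace X] (f : X → X) (M : Set X) : Prop :=
  IsMinimalSet f M ∧ ∀ hM : Set.MapsTo f M M, Nonempty (AAWitness (restrictMap hM))

/-- `M` is an almost periodic minimal set of `f`: the family of iterates of the
restriction of `f` to `M` is equicontinuous. -/
def IsAPMinimal {X : Type*} [MetricSpace X] (f : X → X) (M : Set X) : Prop :=
  IsMinimalSet f M ∧ ∀ hM : Set.MapsTo f M M, AlmostPeriodicMap (restrictMap hM)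

/-- A subset of a product is pinched if some fibre is a singleton. -/
def Pinched {Θ X : Type*} (A : Set (Θ × X)) : Prop := ∃ θ : Θ, ∃! x : X, (θ, x) ∈ A

/-- An `α`-forced increasing interval map on `Θ × I`: a continuous skew product over `α`
whose fibre maps are strictly increasing. -/
def ForcedIncreasing {Θ : Type*} [TopologicalSpace Θ] {I : Set ℝ} (α : Θ → Θ)
    (f : Θ × ↥I → Θ × ↥I) : Prop :=
  Continuous f ∧ (∀ p : Θ × ↥I, (f p).1 = α p.1) ∧
    ∀ θ : Θ, StrictMono fun x : ↥I => (f (θ, x)).2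

/-- The fibre of `M ⊆ Θ × I` over `θ`, as a set of reals. -/
def fiberSet {Θ : Type*} {I : Set ℝ} (M : Set (Θ × ↥I)) (θ : Θ) : Set ℝ :=
  (fun x : ↥I => (x : ℝ)) '' {x : ↥I | (θ, x) ∈ M}

/-- The filled-in envelope `[φ⁻_M, φ⁺_M]` of `M`, where `φ⁻_M(θ) = inf M_θ` and
`φ⁺_M(θ) = sup M_θ`. -/
def FilledEnvelope {Θ : Type*} {I : Set ℝ} (M : Set (Θ × ↥I)) : Set (Θ × ↥I) :=
  {p : Θ × ↥I | sInf (fiberSet M p.1) ≤ (p.2 : ℝ) ∧ (p.2 : ℝ) ≤ sSup (fiberSet M p.1)}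

/-- The graph of a curve `γ : Θ → I`. -/
def curveGraph {Θ : Type*} {I : Set ℝ} (γ : Θ → ↥I) : Set (Θ × ↥I) :=
  {p : Θ × ↥I | p.2 = γ p.1}

/-- The conclusion of the blow-up construction (properties (i)-(v) of the main theorem):
`f̂` is a topological extension of `f` via the fibre-respecting factor map `h`, `f̂` is an
`α`-forced increasing interval map, the fibre maps of `h` are non-decreasing, `h` is
injective off `h⁻¹(Γ)`, countably many points of `Γ` have non-degenerate vertical-segment
preimages while all other points of `Γ` have singleton preimages, and `h⁻¹(Γ)` contains
the graph of no continuous curve. -/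
def BlowUpConclusion {Θ : Type*} [TopologicalSpace Θ] {I : Set ℝ}
    (α : Θ → Θ) (f : Θ × ↥I → Θ × ↥I) (γ : Θ → ↥I)
    (fhat : Θ × ↥I → Θ × ↥I) (h : Θ × ↥I → Θ × ↥I) : Prop :=
  IsFactorMap fhat f h ∧ (∀ p : Θ × ↥I, (h p).1 = p.1) ∧
  ForcedIncreasing α fhat ∧
  (∀ θ : Θ, Monotone fun x : ↥I => (h (θ, x)).2) ∧
  Set.InjOn h (h ⁻¹' curveGraph γ)ᶜ ∧
  (∃ C : Set (Θ × ↥I), C ⊆ curveGraph γ ∧ C.Countable ∧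
    (∀ p ∈ C, ∃ x₁ x₂ : ↥I, x₁ < x₂ ∧ h ⁻¹' {p} = {p.1} ×ˢ Set.Icc x₁ x₂) ∧
    (∀ p ∈ curveGraph γ \ C, ∃ x : ↥I, h ⁻¹' {p} = {(p.1, x)})) ∧
  (∀ η : Θ → ↥I, Continuous η → ¬ (curveGraph η ⊆ h ⁻¹' curveGraph γ))


/-! A skew product `f` over an injective `α` that leaves `M` invariant maps the fibre `M_θ`
bijectively onto `M_{αθ}`, so the base points with singleton fibre form an `α`-invariant set;
it contains the orbit of `θ₀`, which is dense by minimality. For the almost automorphic part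
the factor is `(Θ, α)` itself: if `αᵏ` is `ε/3`-close to the identity for a set of `k` with
gaps at most `N`, then every iterate `αⁿ = αᵏ ∘ αⁿ⁻ᵏ` is controlled by one of the finitely
many `αᵐ`, `|m| ≤ N`, which makes the family of all iterates uniformly equicontinuous. -/

lemma zIter_add {X : Type*} (g : Equiv.Perm X) (m n : ℤ) (x : X) :
    zIter g (m + n) x = zIter g m (zIter g n x) := by
  simp only [zIter, zpow_add, Equiv.Perm.mul_apply]

lemma zIter_add_one {X : Type*} (g : Equiv.Perm X) (n : ℤ) (x : X) :
    zIter g (n + 1) x = g (zIter g n x) := by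
  rw [add_comm, zIter_add]
  simp only [zIter, zpow_one]

lemma Homeomorph.toEquiv_zpow {X : Type*} [TopologicalSpace X] (h : X ≃ₜ X) (n : ℤ) :
    (h ^ n).toEquiv = h.toEquiv ^ n :=
  map_zpow ({ toFun := Homeomorph.toEquiv, map_one' := rfl, map_mul' := fun _ _ => rfl } :
    (X ≃ₜ X) →* Equiv.Perm X) h n

lemma continuous_zIter {X : Type*} [TopologicalSpace X] (h : X ≃ₜ X) (n : ℤ) :
    Continuous (zIter h.toEquiv n) := by
  have : zIter h.toEquiv n = ⇑(h ^ n) := by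
    funext x
    simp only [zIter, ← Homeomorph.toEquiv_zpow, Homeomorph.coe_toEquiv]
  exact this ▸ (h ^ n).continuous

theorem AlmostPeriodicHomeo.uniformEquicontinuous_zIter {Θ : Type*} [MetricSpace Θ]
    [CompactSpace Θ] {α : Θ ≃ₜ Θ} (hα : AlmostPeriodicHomeo α) :
    UniformEquicontinuous fun n : ℤ => zIter α.toEquiv n := by
  rw [Metric.uniformEquicontinuous_iff]
  intro ε hε
  obtain ⟨N, hN⟩ := hα (ε / 3) (by positivity)
  have hfin : UniformEquicontinuous fun m : Icc (-(N : ℤ)) N => zIter α.toEquiv m :=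
    uniformEquicontinuous_finite.2 fun m =>
      CompactSpace.uniformContinuous_of_continuous (continuous_zIter α m)
  obtain ⟨δ, hδ, hfinδ⟩ := Metric.uniformEquicontinuous_iff.1 hfin (ε / 3) (by positivity)
  refine ⟨δ, hδ, fun θ θ' hθθ' n => ?_⟩
  obtain ⟨k, hk, hkn⟩ := hN n
  have hnk : n - k ∈ Icc (-(N : ℤ)) N := by
    rw [abs_le] at hkn
    exact ⟨by omega, by omega⟩
  have hsplit : ∀ x, zIter α.toEquiv n x = zIter α.toEquiv k (zIter α.toEquiv (n - k) x) := by
    intro x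
    rw [← zIter_add, add_sub_cancel]
  set y := zIter α.toEquiv (n - k) θ
  set y' := zIter α.toEquiv (n - k) θ'
  calc dist (zIter α.toEquiv n θ) (zIter α.toEquiv n θ')
      ≤ dist (zIter α.toEquiv n θ) y + dist y y' + dist y' (zIter α.toEquiv n θ') :=
        dist_triangle4 _ _ _ _
    _ < ε / 3 + ε / 3 + ε / 3 := by
        rw [hsplit θ, hsplit θ', dist_comm y']
        gcongr
        exacts [hk y, hfinδ θ θ' hθθ' ⟨n - k, hnk⟩, hk y']
    _ = ε := by ring

lemma existsUnique_mem_iff_encard_eq_one {X : Type*} {s : Set X} :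
    (∃! x, x ∈ s) ↔ s.encard = 1 := by
  simp only [encard_eq_one, eq_singleton_iff_unique_mem]
  rfl

section SkewProduct

variable {Θ X : Type*} {α : Θ → Θ} {f : Θ × X → Θ × X} {M : Set (Θ × X)}

lemma image_fibre_eq_fibre_apply (hskew : ∀ p, (f p).1 = α p.1) (hα : Injective α)
    (hM : f '' M = M) (θ : Θ) :
    (fun x => (f (θ, x)).2) '' {x | (θ, x) ∈ M} = {x | (α θ, x) ∈ M} := by
  ext y
  constructor
  · rintro ⟨x, hx, rfl⟩
    have hfx : f (θ, x) = (α θ, (f (θ, x)).2) := Prod.ext (hskew _) rfl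
    rw [mem_ofPred_eq, ← hfx, ← hM]
    exact mem_image_of_mem f hx
  · intro hy
    obtain ⟨⟨θ', x⟩, hx, hfx⟩ := hM.symm ▸ hy
    have hθ' : θ' = θ := hα (by rw [← hskew (θ', x), hfx])
    subst hθ'
    exact ⟨x, hx, congrArg Prod.snd hfx⟩

lemma injective_snd_apply (hskew : ∀ p, (f p).1 = α p.1) (hf : Injective f) (θ : Θ) :
    Injective fun x : X => (f (θ, x)).2 := fun x x' h =>
  congrArg Prod.snd (hf (Prod.ext (by rw [hskew, hskew]) h))

lemma existsUnique_fibre_apply_iff (hskew : ∀ p, (f p).1 = α p.1) (hα : Injective α)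
    (hf : Injective f) (hM : f '' M = M) (θ : Θ) :
    (∃! x, (α θ, x) ∈ M) ↔ ∃! x, (θ, x) ∈ M :=
  calc (∃! x, (α θ, x) ∈ M) ↔ {x | (α θ, x) ∈ M}.encard = 1 := existsUnique_mem_iff_encard_eq_one
    _ ↔ {x | (θ, x) ∈ M}.encard = 1 := by
        rw [← image_fibre_eq_fibre_apply hskew hα hM, (injective_snd_apply hskew hf θ).encard_image]
    _ ↔ ∃! x, (θ, x) ∈ M := existsUnique_mem_iff_encard_eq_one.symm

lemma existsUnique_fibre_zIter {g : Equiv.Perm Θ} (hskew : ∀ p, (f p).1 = g p.1)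
    (hf : Injective f) (hM : f '' M = M) {θ₀ : Θ} (h₀ : ∃! x, (θ₀, x) ∈ M) (n : ℤ) :
    ∃! x, (zIter g n θ₀, x) ∈ M := by
  have step := existsUnique_fibre_apply_iff hskew g.injective hf hM
  induction n using Int.induction_on with
  | zero => exact h₀
  | succ k ih => exact zIter_add_one g k θ₀ ▸ (step _).2 ih
  | pred k ih =>
      refine (step _).1 ?_
      rwa [← zIter_add_one, sub_add_cancel]

lemma existsUnique_fst_eq_of_existsUnique_mem {θ : Θ} (h : ∃! x, (θ, x) ∈ M) :
    ∃! p : M, (p : Θ × X).1 = θ := by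
  obtain ⟨x, hx, hu⟩ := h
  refine ⟨⟨(θ, x), hx⟩, rfl, ?_⟩
  rintro ⟨⟨θ', x'⟩, hx'⟩ rfl
  obtain rfl := hu x' hx'
  rfl

lemma isFactorMap_fst [TopologicalSpace Θ] [TopologicalSpace X]
    (hskew : ∀ p, (f p).1 = α p.1) (hproj : Prod.fst '' M = univ) (hM : MapsTo f M M) :
    IsFactorMap (restrictMap hM) α fun p : M => (p : Θ × X).1 := by
  refine ⟨continuous_fst.comp continuous_subtype_val, fun θ => ?_, funext fun p => hskew p⟩
  obtain ⟨p, hp, rfl⟩ := hproj.symm ▸ mem_univ θ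
  exact ⟨⟨p, hp⟩, rfl⟩

end SkewProduct

theorem stmt13_general {Θ X : Type} [MetricSpace Θ] [CompactSpace Θ] [MetricSpace X] [CompactSpace X]
    (α : Θ ≃ₜ Θ) (hαmin : MinimalHomeo α)
    (f : (Θ × X) ≃ₜ (Θ × X)) (hskew : ∀ p : Θ × X, (f p).1 = α p.1)
    (M : Set (Θ × X))
    (hMinv : ⇑f '' M = M) (hproj : Prod.fst '' M = Set.univ)
    (θ₀ : Θ) (hpinch : ∃! x : X, (θ₀, x) ∈ M) :
    Dense {θ : Θ | ∃! x : X, (θ, x) ∈ M} ∧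
    (∀ hM : Set.MapsTo (⇑f) M M,
      IsFactorMap (restrictMap hM) (⇑α) (fun p : ↥M => (p : Θ × X).1) ∧
      AlmostOneOne (fun p : ↥M => (p : Θ × X).1)) ∧
    (AlmostPeriodicHomeo α → IsMinimalSet (⇑f) M → IsAAMinimal (⇑f) M) := by
  have hdense : Dense {θ : Θ | ∃! x : X, (θ, x) ∈ M} :=
    (hαmin θ₀).mono <| range_subset_iff.2 <|
      existsUnique_fibre_zIter (g := α.toEquiv) hskew f.injective hMinv hpinch
  have ha11 : AlmostOneOne fun p : ↥M => (p : Θ × X).1 :=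
    hdense.mono fun _ => existsUnique_fst_eq_of_existsUnique_mem
  refine ⟨hdense, fun hM => ⟨isFactorMap_fst hskew hproj hM, ha11⟩,
    fun hap hmin => ⟨hmin, fun hM => ⟨?_⟩⟩⟩
  exact
    { Y := Θ
      g := α
      hmap := fun p : ↥M => (p : Θ × X).1
      factor := isFactorMap_fst hskew hproj hM
      a11 := ha11
      ap := Metric.uniformEquicontinuous_iff.1 hap.uniformEquicontinuous_zIter }

/-- a pinched invariant set of a skew product over a minimal base has a
dense set of singleton fibres; the first-coordinate projection is an almost 1-1 factor
map onto the base, and if the base is almost periodic and `M` minimal then `M` is an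
almost automorphic minimal set. -/
theorem stmt13 {Θ X : Type} [MetricSpace Θ] [CompactSpace Θ] [MetricSpace X] [CompactSpace X]
    (α : Θ ≃ₜ Θ) (hαmin : MinimalHomeo α)
    (f : (Θ × X) ≃ₜ (Θ × X)) (hskew : ∀ p : Θ × X, (f p).1 = α p.1)
    (M : Set (Θ × X)) (hMne : M.Nonempty) (hMcomp : IsCompact M)
    (hMinv : ⇑f '' M = M) (hproj : Prod.fst '' M = Set.univ)
    (θ₀ : Θ) (hpinch : ∃! x : X, (θ₀, x) ∈ M) :
    Dense {θ : Θ | ∃! x : X, (θ, x) ∈ M} ∧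
    (∀ hM : Set.MapsTo (⇑f) M M,
      IsFactorMap (restrictMap hM) (⇑α) (fun p : ↥M => (p : Θ × X).1) ∧
      AlmostOneOne (fun p : ↥M => (p : Θ × X).1)) ∧
    (AlmostPeriodicHomeo α → IsMinimalSet (⇑f) M → IsAAMinimal (⇑f) M) :=
  stmt13_general α hαmin f hskew M hMinv hproj θ₀ hpinch

end
end

section
/- Let R be an irrational rotation of T¹ = ℝ/ℤ, let g : I → I be a continuous map of a compact interval, and let F = R × g : T¹ × I → T¹ × I, F(θ,x) = (R(θ), g(x)). If γ : T¹ → I is continuous and its graph Γ = {(θ,γ(θ))} is F-periodic, i.e. F^q(Γ) = Γ for some q ≥ 1, then γ is constant, and its constant value is a q-periodic point of g. In particular, the periodic continuous curves of F correspond exactly to the periodic points of g. -/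
open Set Function MeasureTheory

noncomputable section

/-! Periodicity of the graph means `g^[q] (γ θ) = γ (θ + qρ)`. Comparing this at a maximum and
at a minimum of `γ`, the intermediate value theorem gives `θ₀` with `γ (θ₀ + qρ) = γ θ₀`, so
`c = γ θ₀` is fixed by `g^[q]`. The closed set `{θ | γ θ = c}` is then invariant under the
rotation by the irrational `qρ`, whose forward orbits are dense, hence it is all of `T¹`. -/

theorem AddCircle.denseRange_nsmul_coe {p a : ℝ} [Fact (0 < p)] (ha : Irrational (a / p)) :
    DenseRange (fun n : ℕ => n • (a : AddCircle p)) :=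
  denseRange_zsmul_iff_nsmul.mp (AddCircle.denseRange_zsmul_coe_iff.mpr ha)

theorem IsClosed.eq_univ_of_add_mem_of_denseRange_nsmul {G : Type*} [AddGroup G]
    [TopologicalSpace G] [ContinuousAdd G] {S : Set G} {a x : G} (hS : IsClosed S) (hx : x ∈ S)
    (hadd : ∀ y ∈ S, y + a ∈ S) (ha : DenseRange (fun n : ℕ => n • a)) : S = univ := by
  have horbit : ∀ n : ℕ, x + n • a ∈ S := by
    intro n
    induction n with
    | zero => simpa using hx
    | succ n ih => simpa [succ_nsmul, add_assoc] using hadd _ ih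
  have hdense : DenseRange (fun n : ℕ => x + n • a) :=
    (Homeomorph.addLeft x).surjective.denseRange.comp ha (Homeomorph.addLeft x).continuous
  refine eq_univ_of_univ_subset ?_
  rw [← hdense.closure_range, ← hS.closure_eq]
  exact closure_mono (range_subset_iff.mpr horbit)

theorem Continuous.exists_comp_apply_eq_apply {X α : Type*} [TopologicalSpace X] [CompactSpace X]
    [PreconnectedSpace X] [Nonempty X] [LinearOrder α] [TopologicalSpace α]
    [OrderClosedTopology α] {φ : X → α} (hφ : Continuous φ) {τ : X → X} (hτ : Continuous τ) :
    ∃ x, φ (τ x) = φ x := by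
  obtain ⟨xmax, -, hmax⟩ := isCompact_univ.exists_isMaxOn univ_nonempty hφ.continuousOn
  obtain ⟨xmin, -, hmin⟩ := isCompact_univ.exists_isMinOn univ_nonempty hφ.continuousOn
  exact intermediate_value_univ₂ (hφ.comp hτ) hφ (hmax (mem_univ _)) (hmin (mem_univ _))

section curveGraph

variable {Θ : Type*} {I : Set ℝ} {f : Θ → Θ} {g : ↥I → ↥I}

theorem apply_eq_of_image_prodMap_curveGraph_subset {γ : Θ → ↥I}
    (h : Prod.map f g '' curveGraph γ ⊆ curveGraph γ) (θ : Θ) : g (γ θ) = γ (f θ) :=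
  h ⟨(θ, γ θ), rfl, rfl⟩

theorem image_prodMap_curveGraph_const (hf : Surjective f) {c : ↥I} (hc : g c = c) :
    Prod.map f g '' curveGraph (fun _ : Θ => c) = curveGraph (fun _ : Θ => c) := by
  ext ⟨θ, x⟩
  constructor
  · rintro ⟨⟨θ', x'⟩, hx' : x' = c, hmap⟩
    subst hx'
    rw [← hmap]
    exact hc
  · rintro (rfl : x = c)
    obtain ⟨θ', rfl⟩ := hf θ
    exact ⟨(θ', x), rfl, by simp [hc]⟩

end curveGraph

theorem stmt15_general {I : Set ℝ}
    (ρ : ℝ) (hρ : Irrational ρ)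
    (g : ↥I → ↥I)
    (F : T1 × ↥I → T1 × ↥I) (hF : F = fun p : T1 × ↥I => (p.1 + (ρ : T1), g p.2))
    (q : ℕ) (hq : 1 ≤ q)
    (γ : T1 → ↥I) (hγ : Continuous γ)
    (hper : F^[q] '' curveGraph γ = curveGraph γ) :
    (∃ cv : ↥I, (∀ θ : T1, γ θ = cv) ∧ g^[q] cv = cv) ∧
    (∀ cv : ↥I, g^[q] cv = cv →
      F^[q] '' curveGraph (fun _ : T1 => cv) = curveGraph (fun _ : T1 => cv)) := by
  set A : T1 := ((q * ρ : ℝ) : T1)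
  have hFq : F^[q] = Prod.map (· + A) g^[q] := by
    subst hF
    rw [show (fun p : T1 × ↥I => (p.1 + (ρ : T1), g p.2)) = Prod.map (· + (ρ : T1)) g from rfl,
      Prod.map_iterate, add_right_iterate]
    simp [A]
  rw [hFq] at hper ⊢
  have hγA := apply_eq_of_image_prodMap_curveGraph_subset hper.subset
  obtain ⟨θ₀, hθ₀⟩ := hγ.exists_comp_apply_eq_apply (continuous_add_const A)
  have hfix : g^[q] (γ θ₀) = γ θ₀ := (hγA θ₀).trans hθ₀
  have hdense : DenseRange (fun n : ℕ => n • A) :=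
    AddCircle.denseRange_nsmul_coe (by simpa using hρ.natCast_mul (by omega))
  have hconst : {θ | γ θ = γ θ₀} = univ :=
    (isClosed_eq hγ continuous_const).eq_univ_of_add_mem_of_denseRange_nsmul rfl
      (fun θ (hθ : γ θ = γ θ₀) => by show γ (θ + A) = γ θ₀; rw [← hγA, hθ, hfix]) hdense
  exact ⟨⟨γ θ₀, fun θ => eq_univ_iff_forall.mp hconst θ, hfix⟩,
    fun c hc => image_prodMap_curveGraph_const (add_right_surjective A) hc⟩

/-- for a direct product `F = R × g` of an irrational rotation and an
interval map, every periodic continuous curve is constant, with value a periodic point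
of `g`; conversely every periodic point of `g` yields a constant periodic curve. -/
theorem stmt15 {I : Set ℝ} (hIcomp : IsCompact I) (hIconn : I.OrdConnected)
    (ρ : ℝ) (hρ : Irrational ρ)
    (g : ↥I → ↥I) (hg : Continuous g)
    (F : T1 × ↥I → T1 × ↥I) (hF : F = fun p : T1 × ↥I => (p.1 + (ρ : T1), g p.2))
    (q : ℕ) (hq : 1 ≤ q)
    (γ : T1 → ↥I) (hγ : Continuous γ)
    (hper : F^[q] '' curveGraph γ = curveGraph γ) :
    (∃ cv : ↥I, (∀ θ : T1, γ θ = cv) ∧ g^[q] cv = cv) ∧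
    (∀ cv : ↥I, g^[q] cv = cv →
      F^[q] '' curveGraph (fun _ : T1 => cv) = curveGraph (fun _ : T1 => cv)) :=
  stmt15_general ρ hρ g F hF q hq γ hγ hper

end
end
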